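/- arXiv:0805.3135 — 3 statements merged into one kernel-verified Lean document; each statement's English description precedes it below -/
import Mathlib

section
/- For |p|,|q|<1 and z ∈ ℂ*, the elliptic gamma function satisfies the argument duplication formula Γ(z²;p,q) = Γ(z;p,q) Γ(-z;p,q) Γ(q^{1/2}z;p,q) Γ(-q^{1/2}z;p,q) Γ(p^{1/2}z;p,q) Γ(-p^{1/2}z;p,q) Γ((pq)^{1/2}z;p,q) Γ(-(pq)^{1/2}z;p,q), where q^{1/2}, p^{1/2}, (pq)^{1/2} are fixed square roots with (pq)^{1/2} = p^{1/2} q^{1/2}. -/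
noncomputable def qPochhammerInf (z q : ℂ) : ℂ := ∏' j : ℕ, (1 - z * q ^ j)

noncomputable def theta (z p : ℂ) : ℂ :=
  ∏' j : ℕ, (1 - z * p ^ j) * (1 - p ^ (j + 1) * z⁻¹)

noncomputable def ellGamma (z p q : ℂ) : ℂ :=
  ∏' jk : ℕ × ℕ,
    (1 - z⁻¹ * p ^ (jk.1 + 1) * q ^ (jk.2 + 1)) / (1 - z * p ^ jk.1 * q ^ jk.2)

/-!
Both sides are quotients of double Pochhammer products `P(c; u, v) = ∏_{j,k} (1 - c u^j v^k)`,
since `Γ(z; p, q) = P(pq/z; p, q) / P(z; p, q)`. Writing `p = u²`, `q = v²`, the factorisation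
`1 - c² x² = (1 - c x)(1 + c x)` gives `P(c²; u², v²) = P(c; u, v) P(-c; u, v)`, and splitting
`j` and `k` by parity turns each `P(±c; u, v)` into the four products `P(±s c; u², v²)`,
`s ∈ {1, u, v, uv}`. Applied to `c = z` and to `c = uv/z`, this yields the eight gamma factors;
their numerators match because `s ↦ uv/s` permutes `{1, u, v, uv}`.
-/

theorem tprod_prod_even_mul_odd {M β : Type*} [CommMonoid M] [TopologicalSpace M]
    [ContinuousMul M] [T2Space M] {f : ℕ × β → M}
    (he : Multipliable fun x : ℕ × β ↦ f (2 * x.1, x.2))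
    (ho : Multipliable fun x : ℕ × β ↦ f (2 * x.1 + 1, x.2)) :
    (∏' x : ℕ × β, f (2 * x.1, x.2)) * ∏' x : ℕ × β, f (2 * x.1 + 1, x.2) =
      ∏' x, f x := by
  let e : (ℕ × β) ⊕ (ℕ × β) ≃ ℕ × β :=
    (Equiv.sumProdDistrib ℕ ℕ β).symm.trans (Equiv.natSumNatEquivNat.prodCongr (.refl β))
  let g : (ℕ × β) ⊕ (ℕ × β) → M :=
    Sum.elim (fun x ↦ f (2 * x.1, x.2)) (fun x ↦ f (2 * x.1 + 1, x.2))
  have hfe : ∀ x, f (e x) = g x := by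
    rintro (x | x) <;> simp [e, g, Equiv.natSumNatEquivNat_apply]
  rw [← e.tprod_eq f, tprod_congr hfe, Multipliable.tprod_sum (f := g) he ho]
  rfl

theorem tprod_one_sub_div_one_sub {K ι : Type*} [NormedField K] [CompleteSpace K] {f g : ι → K}
    (hf : Summable fun i ↦ ‖f i‖) (hg : Summable fun i ↦ ‖g i‖) :
    ∏' i, (1 - f i) / (1 - g i) = (∏' i, (1 - f i)) / ∏' i, (1 - g i) := by
  simp_rw [sub_eq_add_neg]
  replace hf : Summable fun i ↦ ‖-f i‖ := by simpa using hf
  replace hg : Summable fun i ↦ ‖-g i‖ := by simpa using hg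
  by_cases hzero : ∃ i, 1 + -g i = 0
  · -- both sides are `0`: a factor of the left is `x / 0 = 0`, and the right divides by `0`
    obtain ⟨i, hi⟩ := hzero
    rw [tprod_of_exists_eq_zero ⟨i, by simp [hi]⟩,
      tprod_of_exists_eq_zero (f := fun i ↦ 1 + -g i) ⟨i, hi⟩, div_zero]
  · push Not at hzero
    exact ((multipliable_one_add_of_summable hf).hasProd.div₀
      (multipliable_one_add_of_summable hg).hasProd
      (tprod_one_add_ne_zero_of_summable hzero hg)).tprod_eq

theorem mul_inv_mul_sq {G₀ : Type*} [CommGroupWithZero G₀] (a b : G₀) :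
    (a * b)⁻¹ * a ^ 2 = a * b⁻¹ := by
  rw [mul_inv, mul_right_comm, sq, ← mul_assoc, inv_mul_mul_self]

section NormedField

variable {K : Type*} [NormedField K]

theorem summable_norm_mul_pow_mul_pow (c : K) {u v : K} (hu : ‖u‖ < 1) (hv : ‖v‖ < 1) :
    Summable fun x : ℕ × ℕ ↦ ‖c * u ^ x.1 * v ^ x.2‖ := by
  have h := ((summable_geometric_of_lt_one (norm_nonneg u) hu).mul_left ‖c‖).mul_of_nonneg
    (summable_geometric_of_lt_one (norm_nonneg v) hv) (fun _ ↦ by positivity)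
    (fun _ ↦ by positivity)
  simpa [mul_assoc] using h

noncomputable def doublePochhammer (c u v : K) : K :=
  ∏' x : ℕ × ℕ, (1 - c * u ^ x.1 * v ^ x.2)

theorem doublePochhammer_comm (c u v : K) : doublePochhammer c u v = doublePochhammer c v u := by
  rw [doublePochhammer, doublePochhammer, ← (Equiv.prodComm ℕ ℕ).tprod_eq]
  exact tprod_congr fun x ↦ by
    rw [Equiv.prodComm_apply, Prod.fst_swap, Prod.snd_swap, mul_right_comm]

variable [CompleteSpace K] {u v : K} (hu : ‖u‖ < 1) (hv : ‖v‖ < 1)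
include hu hv

theorem multipliable_one_sub_mul_pow_mul_pow (c : K) :
    Multipliable fun x : ℕ × ℕ ↦ 1 - c * u ^ x.1 * v ^ x.2 := by
  simpa [sub_eq_add_neg] using
    multipliable_one_add_of_summable (f := fun x : ℕ × ℕ ↦ -(c * u ^ x.1 * v ^ x.2))
      (by simpa using summable_norm_mul_pow_mul_pow c hu hv)

theorem doublePochhammer_sq (c : K) :
    doublePochhammer (c ^ 2) (u ^ 2) (v ^ 2) =
      doublePochhammer c u v * doublePochhammer (-c) u v := by
  rw [doublePochhammer, doublePochhammer, doublePochhammer,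
    ← (multipliable_one_sub_mul_pow_mul_pow hu hv c).tprod_mul
      (multipliable_one_sub_mul_pow_mul_pow hu hv (-c))]
  exact tprod_congr fun x ↦ by ring

theorem doublePochhammer_eq_mul_fst (c : K) :
    doublePochhammer c u v = doublePochhammer c (u ^ 2) v * doublePochhammer (u * c) (u ^ 2) v := by
  have hu2 : ‖u ^ 2‖ < 1 := by rw [norm_pow]; exact pow_lt_one₀ (norm_nonneg u) hu two_ne_zero
  have heven : ∀ x : ℕ × ℕ,
      1 - c * u ^ (2 * x.1) * v ^ x.2 = 1 - c * (u ^ 2) ^ x.1 * v ^ x.2 :=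
    fun x ↦ by rw [pow_mul]
  have hodd : ∀ x : ℕ × ℕ,
      1 - c * u ^ (2 * x.1 + 1) * v ^ x.2 = 1 - u * c * (u ^ 2) ^ x.1 * v ^ x.2 :=
    fun x ↦ by rw [pow_succ, pow_mul]; ring
  rw [doublePochhammer,
    ← tprod_prod_even_mul_odd (f := fun x : ℕ × ℕ ↦ 1 - c * u ^ x.1 * v ^ x.2)]
  · simp only [heven, hodd, doublePochhammer]
  · simpa only [heven] using multipliable_one_sub_mul_pow_mul_pow hu2 hv c
  · simpa only [hodd] using multipliable_one_sub_mul_pow_mul_pow hu2 hv (u * c)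

theorem doublePochhammer_eq_mul_snd (c : K) :
    doublePochhammer c u v = doublePochhammer c u (v ^ 2) * doublePochhammer (v * c) u (v ^ 2) := by
  rw [doublePochhammer_comm, doublePochhammer_eq_mul_fst hv hu, doublePochhammer_comm,
    doublePochhammer_comm (v * c)]

theorem doublePochhammer_eq_prod_parity (c : K) :
    doublePochhammer c u v =
      doublePochhammer c (u ^ 2) (v ^ 2) * doublePochhammer (u * c) (u ^ 2) (v ^ 2) *
        doublePochhammer (v * c) (u ^ 2) (v ^ 2) *
        doublePochhammer (u * v * c) (u ^ 2) (v ^ 2) := by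
  have hu2 : ‖u ^ 2‖ < 1 := by rw [norm_pow]; exact pow_lt_one₀ (norm_nonneg u) hu two_ne_zero
  rw [doublePochhammer_eq_mul_fst hu hv, doublePochhammer_eq_mul_snd hu2 hv,
    doublePochhammer_eq_mul_snd hu2 hv (u * c), show v * (u * c) = u * v * c by ring]
  ring

end NormedField

theorem ellGamma_eq_div {p q : ℂ} (hp : ‖p‖ < 1) (hq : ‖q‖ < 1) (z : ℂ) :
    ellGamma z p q = doublePochhammer (z⁻¹ * p * q) p q / doublePochhammer z p q := by
  rw [ellGamma, doublePochhammer, doublePochhammer, ← tprod_one_sub_div_one_sub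
    (summable_norm_mul_pow_mul_pow _ hp hq) (summable_norm_mul_pow_mul_pow _ hp hq)]
  exact tprod_congr fun x ↦ by rw [pow_succ, pow_succ]; ring

theorem ellGamma_duplication_general (p q z sp sq : ℂ) (hp : ‖p‖ < 1) (hq : ‖q‖ < 1)
    (hsp : sp ^ 2 = p) (hsq : sq ^ 2 = q) :
    ellGamma (z ^ 2) p q =
      ellGamma z p q * ellGamma (-z) p q *
      ellGamma (sq * z) p q * ellGamma (-(sq * z)) p q *
      ellGamma (sp * z) p q * ellGamma (-(sp * z)) p q *
      ellGamma (sp * sq * z) p q * ellGamma (-(sp * sq * z)) p q := by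
  subst hsp hsq
  have hu : ‖sp‖ < 1 := by
    rwa [norm_pow, pow_lt_one_iff_of_nonneg (norm_nonneg _) two_ne_zero] at hp
  have hv : ‖sq‖ < 1 := by
    rwa [norm_pow, pow_lt_one_iff_of_nonneg (norm_nonneg _) two_ne_zero] at hq
  have h1 : (z ^ 2)⁻¹ * sp ^ 2 * sq ^ 2 = (z⁻¹ * sp * sq) ^ 2 := by rw [← inv_pow]; ring
  have h2 : z⁻¹ * sp ^ 2 * sq ^ 2 = sp * sq * (z⁻¹ * sp * sq) := by ring
  have h3 : (sq * z)⁻¹ * sp ^ 2 * sq ^ 2 = sp * (z⁻¹ * sp * sq) := by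
    rw [mul_right_comm (sq * z)⁻¹, mul_inv_mul_sq]; ring
  have h4 : (sp * z)⁻¹ * sp ^ 2 * sq ^ 2 = sq * (z⁻¹ * sp * sq) := by
    rw [mul_inv_mul_sq]; ring
  have h5 : (sp * sq * z)⁻¹ * sp ^ 2 * sq ^ 2 = z⁻¹ * sp * sq := by
    rw [mul_assoc sp, mul_inv_mul_sq, mul_assoc sp, mul_inv_mul_sq]; ring
  simp only [ellGamma_eq_div hp hq, inv_neg, neg_mul, mul_neg, h1, h2, h3, h4, h5,
    doublePochhammer_sq hu hv, doublePochhammer_eq_prod_parity hu hv]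
  ring

theorem ellGamma_duplication (p q z sp sq : ℂ) (hp : ‖p‖ < 1) (hq : ‖q‖ < 1)
    (hz : z ≠ 0) (hsp : sp ^ 2 = p) (hsq : sq ^ 2 = q) :
    ellGamma (z ^ 2) p q =
      ellGamma z p q * ellGamma (-z) p q *
      ellGamma (sq * z) p q * ellGamma (-(sq * z)) p q *
      ellGamma (sp * z) p q * ellGamma (-(sp * z)) p q *
      ellGamma (sp * sq * z) p q * ellGamma (-(sp * sq * z)) p q :=
  ellGamma_duplication_general p q z sp sq hp hq hsp hsq
end

section
/- For |q|<1 and u ∈ ℂ, the Jacobi triple product identity holds in the form θ₁(u|τ) = i q^{1/8} e^{-πiu} (q;q)_∞ θ(e^{2πiu};q), where q = e^{2πiτ} with Im τ > 0; equivalently, ∑_{k∈ℤ} (−1)^k q^{k(k−1)/2} z^k = (q;q)_∞ (z;q)_∞ (q z^{-1};q)_∞ for z ≠ 0. -/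
/-!
Cauchy's q-binomial theorem `∏_{j<n} (1 + x q^j) = ∑_k [n,k]_q q^{k(k-1)/2} x^k`, taken with
`n = 2N` and `x = -z q^{-N}`, gives the finite triple product
`∏_{j<N} (1 - z q^j)(1 - q^{j+1}/z) = ∑_{|m| ≤ N} (-1)^m q^{m(m-1)/2} z^m [2N, N+m]_q`.
For fixed `m`, `[2N, N+m]_q = (q;q)_{2N} / ((q;q)_{N+m} (q;q)_{N-m}) → 1/(q;q)_∞`, and these
coefficients are bounded uniformly because `(q;q)_n → (q;q)_∞ ≠ 0`; Tannery's theorem lets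
`N → ∞`. The substitution `x = -z q^{-N}` needs `q ≠ 0`; at `q = 0` both sides equal `1 - z`.
-/

open Finset Filter Topology

section Algebra

variable {R : Type*} [CommRing R]

def qPochhammer (z q : R) (n : ℕ) : R := ∏ j ∈ range n, (1 - z * q ^ j)

@[simp]
lemma qPochhammer_zero (z q : R) : qPochhammer z q 0 = 1 := prod_range_zero _

lemma qPochhammer_succ (z q : R) (n : ℕ) :
    qPochhammer z q (n + 1) = qPochhammer z q n * (1 - z * q ^ n) :=
  prod_range_succ _ _

def qBinom (q : R) : ℕ → ℕ → R
  | _, 0 => 1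
  | 0, _ + 1 => 0
  | n + 1, k + 1 => q ^ (k + 1) * qBinom q n (k + 1) + qBinom q n k

@[simp]
lemma qBinom_zero_right (q : R) (n : ℕ) : qBinom q n 0 = 1 := by
  cases n <;> rfl

lemma qBinom_succ_succ (q : R) (n k : ℕ) :
    qBinom q (n + 1) (k + 1) = q ^ (k + 1) * qBinom q n (k + 1) + qBinom q n k := rfl

lemma qBinom_eq_zero_of_lt (q : R) {n k : ℕ} (h : n < k) : qBinom q n k = 0 := by
  induction n generalizing k with
  | zero => obtain ⟨k, rfl⟩ := Nat.exists_eq_succ_of_ne_zero h.ne'; rfl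
  | succ n ih =>
    obtain ⟨k, rfl⟩ := Nat.exists_eq_succ_of_ne_zero (by omega : k ≠ 0)
    rw [qBinom_succ_succ, ih (by omega), ih (by omega), mul_zero, add_zero]

@[simp]
lemma qBinom_self (q : R) (n : ℕ) : qBinom q n n = 1 := by
  induction n with
  | zero => rfl
  | succ n ih =>
    rw [qBinom_succ_succ, ih, qBinom_eq_zero_of_lt q n.lt_succ_self, mul_zero, zero_add]

lemma qBinom_mul_qPochhammer_mul_qPochhammer (q : R) :
    ∀ k l : ℕ, qBinom q (k + l) k * qPochhammer q q k * qPochhammer q q l =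
      qPochhammer q q (k + l)
  | 0, l => by simp
  | k + 1, 0 => by simp
  | k + 1, l + 1 => by
    have h₁ := qBinom_mul_qPochhammer_mul_qPochhammer q (k + 1) l
    have h₂ := qBinom_mul_qPochhammer_mul_qPochhammer q k (l + 1)
    rw [qPochhammer_succ q q k] at h₁
    rw [show k + (l + 1) = k + 1 + l by omega, qPochhammer_succ q q l] at h₂
    rw [show k + 1 + (l + 1) = k + 1 + l + 1 by omega, qBinom_succ_succ,
      qPochhammer_succ q q (k + 1 + l), qPochhammer_succ q q k, qPochhammer_succ q q l]
    linear_combination (q ^ (k + 1) * (1 - q * q ^ l)) * h₁ + (1 - q * q ^ k) * h₂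

/-- Cauchy's q-binomial theorem. -/
theorem prod_one_add_mul_pow_eq_sum_qBinom (q x : R) (n : ℕ) :
    ∏ j ∈ range n, (1 + x * q ^ j) =
      ∑ k ∈ range (n + 1), qBinom q n k * q ^ (k * (k - 1) / 2) * x ^ k := by
  induction n generalizing x with
  | zero => simp
  | succ n ih =>
    let S k := qBinom q n k * q ^ (k * (k - 1) / 2) * (x * q) ^ k
    have hS : ∑ k ∈ range (n + 1), S k = ∑ k ∈ range (n + 1), S (k + 1) + 1 := by
      have hlast : S (n + 1) = 0 := by simp [S, qBinom_eq_zero_of_lt q n.lt_succ_self]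
      rw [← add_zero (∑ k ∈ range (n + 1), S k), ← hlast, ← sum_range_succ, sum_range_succ']
      simp [S]
    have htri (k : ℕ) : q ^ ((k + 1) * k / 2) = q ^ (k * (k - 1) / 2) * q ^ k := by
      rw [← pow_add]
      congr 1
      cases k with
      | zero => rfl
      | succ k =>
        rw [Nat.add_sub_cancel, show (k + 1 + 1) * (k + 1) = k * (k + 1) + 2 * (k + 1) by ring,
          Nat.add_mul_div_left _ _ two_pos, mul_comm]
    rw [prod_range_succ', show ∏ j ∈ range n, (1 + x * q ^ (j + 1)) =
        ∏ j ∈ range n, (1 + x * q * q ^ j) from prod_congr rfl fun j _ => by ring, ih,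
      pow_zero, mul_one, mul_one_add, sum_mul, hS, add_right_comm, ← sum_add_distrib,
      sum_range_succ' _ (n + 1)]
    congr 1
    · refine sum_congr rfl fun k _ => ?_
      simp only [S, qBinom_succ_succ, Nat.add_sub_cancel, htri]
      ring
    · simp

def centralQBinom (q : R) (N : ℕ) (m : ℤ) : R :=
  if m.natAbs ≤ N then qBinom q (2 * N) (m + N).toNat else 0

end Algebra

lemma mul_sub_one_ediv_two_add (a b : ℤ) :
    (a + b) * (a + b - 1) / 2 = a * (a - 1) / 2 + b * (b - 1) / 2 + a * b := by
  obtain ⟨c, hc⟩ := Int.even_mul_pred_self a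
  obtain ⟨d, hd⟩ := Int.even_mul_pred_self b
  rw [show (a + b) * (a + b - 1) = a * (a - 1) + b * (b - 1) + 2 * (a * b) by ring, hc, hd]
  omega

lemma neg_mul_neg_sub_one_ediv_two (k : ℤ) : -k * (-k - 1) / 2 = k * (k - 1) / 2 + k := by
  obtain ⟨c, hc⟩ := Int.even_mul_pred_self k
  rw [show -k * (-k - 1) = k * (k - 1) + 2 * k by ring, hc]
  omega

section JacobiTerm

variable {K : Type*} [Field K]

def jacobiTerm (q z : K) (k : ℤ) : K := (-1) ^ k * q ^ (k * (k - 1) / 2) * z ^ k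

lemma jacobiTerm_natCast (q z : K) (n : ℕ) :
    jacobiTerm q z n = q ^ (n * (n - 1) / 2) * (-z) ^ n := by
  have h : (n : ℤ) * (n - 1) / 2 = ((n * (n - 1) / 2 : ℕ) : ℤ) := by
    rcases n with _ | n
    · rfl
    · push_cast [Nat.add_sub_cancel]
      ring_nf
  rw [jacobiTerm, h, zpow_natCast, zpow_natCast, zpow_natCast, neg_pow]
  ring

lemma jacobiTerm_add {q z : K} (hq : q ≠ 0) (hz : z ≠ 0) (a b : ℤ) :
    jacobiTerm q z (a + b) = jacobiTerm q z a * jacobiTerm q (z * q ^ a) b := by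
  simp only [jacobiTerm]
  rw [mul_sub_one_ediv_two_add, zpow_add₀ hq, zpow_add₀ hq,
    zpow_add₀ (neg_ne_zero.2 one_ne_zero), zpow_add₀ hz, mul_zpow, ← zpow_mul]
  ring

lemma jacobiTerm_neg {q : K} (hq : q ≠ 0) (z : K) (k : ℤ) :
    jacobiTerm q z (-k) = jacobiTerm q (q / z) k := by
  simp only [jacobiTerm]
  rw [neg_mul_neg_sub_one_ediv_two, zpow_add₀ hq, zpow_neg, zpow_neg, ← inv_zpow, inv_neg_one,
    div_zpow]
  ring

theorem prod_range_theta_eq_sum {q z : K} (hq : q ≠ 0) (hz : z ≠ 0) (N : ℕ) :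
    ∏ j ∈ range N, (1 - z * q ^ j) * (1 - q ^ (j + 1) * z⁻¹) =
      ∑ m ∈ Icc (-N : ℤ) N, jacobiTerm q z m * qBinom q (2 * N) (m + N).toNat := by
  obtain ⟨w, hw⟩ : ∃ w, w = z * q ^ (-N : ℤ) := ⟨_, rfl⟩
  have hwN : w * q ^ N = z := by simp [hw, zpow_neg, hq]
  have hshift (k : ℤ) : jacobiTerm q z (-N) * jacobiTerm q w k = jacobiTerm q z (-N + k) := by
    rw [hw, jacobiTerm_add hq hz]
  have hlow : ∏ j ∈ range N, (1 - w * q ^ j) =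
      jacobiTerm q w N * ∏ j ∈ range N, (1 - q ^ (j + 1) * z⁻¹) := by
    have hsplit : ∀ j ∈ range N, 1 - w * q ^ j = -w * q ^ j * (1 - q ^ (N - j) * z⁻¹) := by
      intro j hj
      have : q ^ j * q ^ (N - j) = q ^ N := by
        rw [← pow_add, Nat.add_sub_cancel' (mem_range.1 hj).le]
      linear_combination (-(w * z⁻¹)) * this - z⁻¹ * hwN - mul_inv_cancel₀ hz
    rw [prod_congr rfl hsplit, prod_mul_distrib, prod_mul_distrib, prod_const, card_range,
      prod_pow_eq_pow_sum, sum_range_id, jacobiTerm_natCast, mul_comm ((-w) ^ N),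
      ← prod_range_reflect (fun j => 1 - q ^ (j + 1) * z⁻¹)]
    congr 1
    refine prod_congr rfl fun j hj => ?_
    rw [show N - 1 - j + 1 = N - j by have := mem_range.1 hj; omega]
  have hhigh : ∏ j ∈ range N, (1 - w * q ^ (N + j)) = ∏ j ∈ range N, (1 - z * q ^ j) :=
    prod_congr rfl fun j _ => by rw [pow_add, ← mul_assoc, hwN]
  have hcauchy := prod_one_add_mul_pow_eq_sum_qBinom q (-w) (2 * N)
  simp only [neg_mul, ← sub_eq_add_neg] at hcauchy
  rw [two_mul, prod_range_add, hhigh, hlow] at hcauchy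
  have hinv : jacobiTerm q z (-N) * jacobiTerm q w N = 1 := by
    rw [hshift, neg_add_cancel]
    simp [jacobiTerm]
  calc ∏ j ∈ range N, (1 - z * q ^ j) * (1 - q ^ (j + 1) * z⁻¹)
      = jacobiTerm q z (-N) * ((jacobiTerm q w N * ∏ j ∈ range N, (1 - q ^ (j + 1) * z⁻¹)) *
          ∏ j ∈ range N, (1 - z * q ^ j)) := by
        rw [← mul_assoc, ← mul_assoc, hinv, one_mul, prod_mul_distrib, mul_comm]
    _ = ∑ k ∈ range (2 * N + 1), jacobiTerm q z (-N + k) * qBinom q (2 * N) k := by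
        rw [hcauchy, ← two_mul, mul_sum]
        refine sum_congr rfl fun k _ => ?_
        rw [← hshift, jacobiTerm_natCast]
        ring
    _ = ∑ m ∈ Icc (-N : ℤ) N, jacobiTerm q z m * qBinom q (2 * N) (m + N).toNat := by
        refine sum_nbij' (fun k => -N + k) (fun m => (m + N).toNat) ?_ ?_ ?_ ?_ ?_ <;>
          intro a ha <;> simp only [mem_range, mem_Icc] at ha ⊢
        any_goals omega
        rw [show (-N + a + N : ℤ).toNat = a by omega]

end JacobiTerm

section Analysis

variable {q : ℂ}

lemma summable_norm_mul_pow (hq : ‖q‖ < 1) (c : ℂ) :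
    Summable fun j : ℕ => ‖c * q ^ j‖ := by
  simpa [norm_mul, norm_pow] using
    (summable_geometric_of_lt_one (norm_nonneg q) hq).mul_left ‖c‖

lemma multipliable_one_sub_mul_pow (hq : ‖q‖ < 1) (c : ℂ) :
    Multipliable fun j : ℕ => 1 - c * q ^ j := by
  simpa [sub_eq_add_neg] using
    multipliable_one_add_of_summable (f := fun j => -(c * q ^ j))
      (by simpa using summable_norm_mul_pow hq c)

lemma tendsto_qPochhammer (hq : ‖q‖ < 1) (z : ℂ) :
    Tendsto (qPochhammer z q) atTop (𝓝 (qPochhammerInf z q)) :=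
  (multipliable_one_sub_mul_pow hq z).tendsto_prod_tprod_nat

lemma tendsto_prod_range_theta (hq : ‖q‖ < 1) (z : ℂ) :
    Tendsto (fun N => ∏ j ∈ range N, (1 - z * q ^ j) * (1 - q ^ (j + 1) * z⁻¹)) atTop
      (𝓝 (theta z q)) := by
  have h := (multipliable_one_sub_mul_pow hq z).mul (multipliable_one_sub_mul_pow hq (q * z⁻¹))
  simp only [mul_right_comm q z⁻¹, ← pow_succ'] at h
  exact h.tendsto_prod_tprod_nat

lemma one_sub_mul_pow_ne_zero {z : ℂ} (hz : ‖z‖ < 1) (hq : ‖q‖ ≤ 1) (j : ℕ) :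
    1 - z * q ^ j ≠ 0 := by
  refine sub_ne_zero.2 fun h => ?_
  have : ‖z * q ^ j‖ < 1 := by
    rw [norm_mul, norm_pow]
    exact mul_lt_one_of_nonneg_of_lt_one_left (norm_nonneg z) hz (pow_le_one₀ (norm_nonneg q) hq)
  simp [← h] at this

lemma qPochhammer_ne_zero {z : ℂ} (hz : ‖z‖ < 1) (hq : ‖q‖ ≤ 1) (n : ℕ) :
    qPochhammer z q n ≠ 0 :=
  prod_ne_zero_iff.2 fun j _ => one_sub_mul_pow_ne_zero hz hq j

lemma qPochhammerInf_ne_zero {z : ℂ} (hz : ‖z‖ < 1) (hq : ‖q‖ < 1) :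
    qPochhammerInf z q ≠ 0 := by
  simpa [qPochhammerInf, sub_eq_add_neg] using
    tprod_one_add_ne_zero_of_summable (f := fun j => -(z * q ^ j))
      (by simpa [← sub_eq_add_neg] using one_sub_mul_pow_ne_zero hz hq.le)
      (by simpa using summable_norm_mul_pow hq z)

lemma qBinom_add_eq_div (hq : ‖q‖ < 1) (k l : ℕ) :
    qBinom q (k + l) k = qPochhammer q q (k + l) / (qPochhammer q q k * qPochhammer q q l) := by
  rw [eq_div_iff (mul_ne_zero (qPochhammer_ne_zero hq hq.le k) (qPochhammer_ne_zero hq hq.le l)),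
    ← mul_assoc, qBinom_mul_qPochhammer_mul_qPochhammer]

lemma exists_norm_qBinom_le (hq : ‖q‖ < 1) : ∃ C, ∀ n k, ‖qBinom q n k‖ ≤ C := by
  have hP := tendsto_qPochhammer hq q
  obtain ⟨A, hA⟩ := isBounded_iff_forall_norm_le.1 (Metric.isBounded_range_of_tendsto _ hP)
  obtain ⟨B, hB⟩ := isBounded_iff_forall_norm_le.1 (Metric.isBounded_range_of_tendsto _
    (hP.inv₀ (qPochhammerInf_ne_zero hq hq)))
  have hA0 : 0 ≤ A := (norm_nonneg _).trans (hA _ ⟨0, rfl⟩)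
  have hB0 : 0 ≤ B := (norm_nonneg _).trans (hB _ ⟨0, rfl⟩)
  refine ⟨A * (B * B), fun n k => ?_⟩
  rcases lt_or_ge n k with hnk | hkn
  · rw [qBinom_eq_zero_of_lt q hnk, norm_zero]
    positivity
  · obtain ⟨l, rfl⟩ := Nat.exists_eq_add_of_le hkn
    rw [qBinom_add_eq_div hq, div_eq_mul_inv, mul_inv, norm_mul, norm_mul]
    exact mul_le_mul (hA _ ⟨_, rfl⟩) (mul_le_mul (hB _ ⟨k, rfl⟩) (hB _ ⟨l, rfl⟩)
      (norm_nonneg _) hB0) (by positivity) hA0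

lemma tendsto_qBinom_add (hq : ‖q‖ < 1) {α : Type*} {l : Filter α} {a b : α → ℕ}
    (ha : Tendsto a l atTop) (hb : Tendsto b l atTop) :
    Tendsto (fun i => qBinom q (a i + b i) (a i)) l (𝓝 (qPochhammerInf q q)⁻¹) := by
  have hP := tendsto_qPochhammer hq q
  have hE := qPochhammerInf_ne_zero hq hq
  have hab : Tendsto (fun i => a i + b i) l atTop :=
    tendsto_atTop_mono (fun i => Nat.le_add_right _ _) ha
  simp only [qBinom_add_eq_div hq]
  have h := (hP.comp hab).div ((hP.comp ha).mul (hP.comp hb)) (mul_ne_zero hE hE)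
  rwa [div_mul_cancel_left₀ hE] at h

lemma tendsto_centralQBinom (hq : ‖q‖ < 1) (m : ℤ) :
    Tendsto (fun N => centralQBinom q N m) atTop (𝓝 (qPochhammerInf q q)⁻¹) := by
  have ha : Tendsto (fun N : ℕ => (m + N).toNat) atTop atTop :=
    tendsto_atTop_atTop.2 fun b => ⟨b + m.natAbs, fun N hN => by omega⟩
  have hb : Tendsto (fun N : ℕ => (N - m).toNat) atTop atTop :=
    tendsto_atTop_atTop.2 fun b => ⟨b + m.natAbs, fun N hN => by omega⟩
  refine (tendsto_qBinom_add hq ha hb).congr' ?_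
  filter_upwards [eventually_ge_atTop m.natAbs] with N hN
  rw [centralQBinom, if_pos hN]
  congr 1
  omega

lemma summable_norm_jacobiTerm (hq : ‖q‖ < 1) (hq0 : q ≠ 0) {z : ℂ} (hz : z ≠ 0) :
    Summable fun k : ℤ => ‖jacobiTerm q z k‖ := by
  have summable_nat (w : ℂ) (hw : w ≠ 0) : Summable fun n : ℕ => ‖jacobiTerm q w n‖ := by
    have hstep (n : ℕ) : jacobiTerm q w (n + 1 : ℕ) = jacobiTerm q w n * -(w * q ^ n) := by
      rw [Nat.cast_succ, jacobiTerm_add hq0 hw]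
      simp [jacobiTerm]
    have hsmall : Tendsto (fun n => ‖w‖ * ‖q‖ ^ n) atTop (𝓝 0) := by
      simpa using (tendsto_pow_atTop_nhds_zero_of_lt_one (norm_nonneg q) hq).const_mul ‖w‖
    refine summable_of_ratio_norm_eventually_le (f := fun n : ℕ => ‖jacobiTerm q w n‖)
      one_half_lt_one ?_
    filter_upwards [hsmall.eventually (eventually_le_nhds one_half_pos)] with n hn
    rw [norm_norm, norm_norm, hstep, norm_mul, norm_neg, norm_mul, norm_pow, mul_comm]
    exact mul_le_mul_of_nonneg_right hn (norm_nonneg _)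
  refine Summable.of_nat_of_neg (summable_nat z hz) ?_
  simpa only [jacobiTerm_neg hq0] using summable_nat (q / z) (div_ne_zero hq0 hz)

lemma prod_range_theta_eq_tsum (hq0 : q ≠ 0) {z : ℂ} (hz : z ≠ 0) (N : ℕ) :
    ∏ j ∈ range N, (1 - z * q ^ j) * (1 - q ^ (j + 1) * z⁻¹) =
      ∑' m : ℤ, jacobiTerm q z m * centralQBinom q N m := by
  rw [prod_range_theta_eq_sum hq0 hz, tsum_eq_sum (s := Icc (-N : ℤ) N)]
  · refine sum_congr rfl fun m hm => ?_
    rw [mem_Icc] at hm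
    rw [centralQBinom, if_pos (by omega)]
  · intro m hm
    rw [mem_Icc] at hm
    rw [centralQBinom, if_neg (by omega), mul_zero]

lemma tendsto_tsum_jacobiTerm_mul_centralQBinom (hq : ‖q‖ < 1) (hq0 : q ≠ 0) {z : ℂ}
    (hz : z ≠ 0) :
    Tendsto (fun N => ∑' m : ℤ, jacobiTerm q z m * centralQBinom q N m) atTop
      (𝓝 ((∑' m : ℤ, jacobiTerm q z m) * (qPochhammerInf q q)⁻¹)) := by
  obtain ⟨C, hC⟩ := exists_norm_qBinom_le hq
  have hbound (N : ℕ) (m : ℤ) : ‖centralQBinom q N m‖ ≤ C := by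
    unfold centralQBinom
    split_ifs
    · exact hC _ _
    · simpa using (norm_nonneg _).trans (hC 0 0)
  rw [← tsum_mul_right]
  refine tendsto_tsum_of_dominated_convergence
    ((summable_norm_jacobiTerm hq hq0 hz).mul_right C)
    (fun m => (tendsto_centralQBinom hq m).const_mul _) (Eventually.of_forall fun N m => ?_)
  rw [norm_mul]
  exact mul_le_mul_of_nonneg_left (hbound N m) (norm_nonneg _)

lemma tsum_jacobiTerm_zero_left (z : ℂ) : ∑' k : ℤ, jacobiTerm 0 z k = 1 - z := by
  rw [tsum_eq_sum (s := {0, 1})]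
  · simp [jacobiTerm, sub_eq_add_neg]
  · intro k hk
    have hk' : k * (k - 1) / 2 ≠ 0 := by
      simp only [mem_insert, mem_singleton, not_or] at hk
      obtain ⟨c, hc⟩ := Int.even_mul_pred_self k
      have : 0 < k * (k - 1) := by
        rcases lt_or_gt_of_ne hk.1 with h | h
        · exact mul_pos_of_neg_of_neg h (by omega)
        · exact mul_pos h (by omega)
      omega
    simp [jacobiTerm, zero_zpow _ hk']

lemma theta_zero_right (z : ℂ) : theta z 0 = 1 - z := by
  rw [theta, tprod_eq_mulSingle 0 fun j hj => by simp [zero_pow hj]]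
  simp

end Analysis

theorem jacobi_triple_product (q z : ℂ) (hq : ‖q‖ < 1) (hz : z ≠ 0) :
    ∑' k : ℤ, (-1 : ℂ) ^ k * q ^ (k * (k - 1) / 2) * z ^ k =
      qPochhammerInf q q * theta z q := by
  change ∑' k : ℤ, jacobiTerm q z k = _
  rcases eq_or_ne q 0 with rfl | hq0
  · simp [tsum_jacobiTerm_zero_left, theta_zero_right, qPochhammerInf]
  have htheta : theta z q = (∑' k : ℤ, jacobiTerm q z k) * (qPochhammerInf q q)⁻¹ :=
    tendsto_nhds_unique
      ((tendsto_prod_range_theta hq z).congr (prod_range_theta_eq_tsum hq0 hz))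
      (tendsto_tsum_jacobiTerm_mul_centralQBinom hq hq0 hz)
  rw [htheta, mul_left_comm, mul_inv_cancel₀ (qPochhammerInf_ne_zero hq hq), mul_one]
end

section
/- Modular transformation of the theta function: for Im τ > 0 and u ∈ ℂ, θ₁(u/τ | −1/τ) = −i √(−iτ) e^{πiu²/τ} θ₁(u|τ), where θ₁(u|τ) = −∑_{k∈ℤ} e^{πiτ(k+1/2)²} e^{2πi(k+1/2)(u+1/2)} and √ denotes the principal branch. -/
open Complex

noncomputable def theta1 (u τ : ℂ) : ℂ :=
  -∑' k : ℤ, Complex.exp ((Real.pi : ℂ) * Complex.I * τ * (k + 1 / 2) ^ 2 +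
      2 * (Real.pi : ℂ) * Complex.I * (k + 1 / 2) * (u + 1 / 2))

/-!
Completing the square in `k + 1/2` writes `θ₁(u|τ)` as an exponential factor times Mathlib's
`jacobiTheta₂ (u + (τ + 1)/2) τ`. The Jacobi imaginary transformation of `jacobiTheta₂`, together
with its periodicity `z ↦ z + 1`, then gives the claim once the exponential prefactors are
compared.
-/

open Real

lemma theta1_eq_jacobiTheta₂ (u τ : ℂ) :
    theta1 u τ = -cexp (π * I * (τ / 4 + u + 1 / 2)) * jacobiTheta₂ (u + (τ + 1) / 2) τ := by
  rw [theta1, jacobiTheta₂, ← tsum_mul_left, ← tsum_neg]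
  refine tsum_congr fun k => ?_
  rw [jacobiTheta₂_term, neg_mul, ← Complex.exp_add]
  ring_nf

lemma jacobiTheta₂_div_neg_inv (z : ℂ) {τ : ℂ} (hτ : τ ≠ 0) :
    jacobiTheta₂ (z / τ) (-1 / τ) =
      (-I * τ) ^ (1 / 2 : ℂ) * cexp (π * I * z ^ 2 / τ) * jacobiTheta₂ z τ := by
  have hsqrt : (-I * τ) ^ (1 / 2 : ℂ) * (1 / (-I * τ) ^ (1 / 2 : ℂ)) = 1 :=
    mul_one_div_cancel (by simp [Complex.cpow_eq_zero_iff, hτ, Complex.I_ne_zero])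
  have hexp : cexp (π * I * z ^ 2 / τ) * cexp (-π * I * z ^ 2 / τ) = 1 := by
    rw [← Complex.exp_add, ← Complex.exp_zero]
    ring_nf
  rw [jacobiTheta₂_functional_equation z τ]
  linear_combination (-jacobiTheta₂ (z / τ) (-1 / τ) * cexp (π * I * z ^ 2 / τ) *
    cexp (-π * I * z ^ 2 / τ)) * hsqrt - jacobiTheta₂ (z / τ) (-1 / τ) * hexp

theorem theta1_modular (τ u : ℂ) (hτ : 0 < τ.im) :
    theta1 (u / τ) (-1 / τ) =
      -Complex.I * (-Complex.I * τ) ^ ((1 : ℂ) / 2) *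
        Complex.exp ((Real.pi : ℂ) * Complex.I * u ^ 2 / τ) * theta1 u τ := by
  have hτ0 : τ ≠ 0 := by rintro rfl; simp at hτ
  set z := u + (τ - 1) / 2 with hz
  have harg : u / τ + (-1 / τ + 1) / 2 = z / τ := by field_simp; ring
  have hshift : u + (τ + 1) / 2 = z + 1 := by ring
  have hexp : cexp (π * I * (-1 / τ / 4 + u / τ + 1 / 2)) * cexp (π * I * z ^ 2 / τ) =
      -I * cexp (π * I * u ^ 2 / τ) * cexp (π * I * (τ / 4 + u + 1 / 2)) := by
    rw [← Complex.exp_neg_pi_div_two_mul_I]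
    simp only [← Complex.exp_add]
    congr 1
    rw [hz]
    field_simp
    ring
  rw [theta1_eq_jacobiTheta₂, theta1_eq_jacobiTheta₂, harg, jacobiTheta₂_div_neg_inv z hτ0,
    hshift, jacobiTheta₂_add_left]
  linear_combination -(-I * τ) ^ (1 / 2 : ℂ) * jacobiTheta₂ z τ * hexp
end
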